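/- The identity map on D̃ is an allocation map for any Swiss cheese D = (Δ, 𝒟). Moreover, if the sum of the radii of the discs in 𝒟 is finite, then the identity is the unique allocation map from D̃ to itself. -/

import Mathlib

/-- An open disc in the complex plane: a set of the form `B(z,r)` with `r > 0`. -/
def IsOpenDisc (D : Set ℂ) : Prop := ∃ z : ℂ, ∃ r : ℝ, 0 < r ∧ D = Metric.ball z r

/-- A closed disc in the complex plane: `{w : |w - z| ≤ r}` with `r > 0`. -/
def IsClosedDisc (D : Set ℂ) : Prop := ∃ z : ℂ, ∃ r : ℝ, 0 < r ∧ D = Metric.closedBall z r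

/-- The radius of a disc, computed as half its diameter (so `r = 0` for `∅` or singletons). -/
noncomputable def discRadius (D : Set ℂ) : ℝ := Metric.diam D / 2

/-- A Swiss cheese: a closed disc `Δ` together with a countable collection `𝒟` of open discs. -/
structure SwissCheese where
  Δ : Set ℂ
  𝒟 : Set (Set ℂ)
  hΔ : IsClosedDisc Δ
  h𝒟 : ∀ D ∈ 𝒟, IsOpenDisc D
  hcount : 𝒟.Countable

/-- `D̃ = 𝒟 ∪ {ℂ ∖ Δ}`. -/
def SwissCheese.tilde (D : SwissCheese) : Set (Set ℂ) := D.𝒟 ∪ {D.Δᶜ}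

/-- The associated Swiss cheese set `X_D = Δ ∖ ⋃ 𝒟`. -/
def SwissCheese.X (D : SwissCheese) : Set ℂ := D.Δ \ ⋃₀ D.𝒟

/-- The (possibly infinite) sum of the radii of a collection of discs. -/
noncomputable def radSum (S : Set (Set ℂ)) : ENNReal :=
  ∑' D : S, ENNReal.ofReal (discRadius D)

/-- `δ(D) = r(Δ) − Σ_{D'∈𝒟} r(D')`, possibly `−∞`. -/
noncomputable def SwissCheese.delta (D : SwissCheese) : EReal :=
  (discRadius D.Δ : EReal) - ((radSum D.𝒟 : ENNReal) : EReal)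

/-- An allocation map between Swiss cheeses. -/
structure IsAllocationMap (D E : SwissCheese) (f : Set ℂ → Set ℂ) : Prop where
  maps_to : ∀ U ∈ D.tilde, f U ∈ E.tilde
  a1 : ∀ U ∈ D.tilde, U ⊆ f U
  a2 : ENNReal.ofReal (discRadius D.Δ - discRadius E.Δ) ≤
      radSum {U | U ∈ D.𝒟 ∧ f U = E.Δᶜ}
  a3 : ∀ E' ∈ E.𝒟, ENNReal.ofReal (discRadius E') ≤ radSum {U | U ∈ D.𝒟 ∧ f U = E'}

/-!
Summing (A3) over all discs of a cheese with finite total radius forces equality throughout: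
no radius can escape to `ℂ ∖ Δ`, so every disc is sent to a disc, and each fibre has total radius
exactly that of its target. By (A1) a disc that moves is sent to a strictly larger one. If some
disc moved, a largest moving disc `U` would be sent to a fixed disc `V`, whose fibre, containing
both `U` and `V`, would weigh more than `V`. Finally `ℂ ∖ Δ` is unbounded, so it lies in no disc
and must be sent to itself.
-/

open scoped ENNReal

section FiberSums

variable {α β : Type*}

theorem ENNReal.tsum_tsum_fiber (s : Set α) (w : α → ℝ≥0∞) (g : α → β) :
    ∑' e, ∑' x : {x | x ∈ s ∧ g x = e}, w x = ∑' x : s, w x := by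
  rw [← ENNReal.tsum_fiberwise (fun x : s => w x) (fun x => g x)]
  refine tsum_congr fun e => ?_
  exact ((Equiv.subtypeSubtypeEquivSubtypeInter (· ∈ s) (g · = e)).tsum_eq (w ·)).symm

theorem ENNReal.tsum_fiber_eq_of_le {s : Set α} {w : α → ℝ≥0∞} {g : α → α}
    (hfin : ∑' x : s, w x ≠ ∞)
    (hle : ∀ e ∈ s, w e ≤ ∑' x : {x | x ∈ s ∧ g x = e}, w x) :
    (∀ x ∈ s, w x ≠ 0 → g x ∈ s) ∧
      ∀ e ∈ s, ∑' x : {x | x ∈ s ∧ g x = e}, w x = w e := by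
  set F : α → ℝ≥0∞ := fun e => ∑' x : {x | x ∈ s ∧ g x = e}, w x
  have hFw : ∀ e : s, w e ≤ F e := fun e => hle e e.2
  have hsplit : ∑' e : s, F e + ∑' e : ↥sᶜ, F e = ∑' x : s, w x := by
    rw [ENNReal.summable.tsum_add_tsum_compl ENNReal.summable, ENNReal.tsum_tsum_fiber]
  have hsum : ∑' e : s, F e = ∑' x : s, w x :=
    le_antisymm (hsplit ▸ le_self_add) (ENNReal.tsum_le_tsum hFw)
  refine ⟨fun x hx hwx => ?_, fun e he => ?_⟩
  · by_contra hgx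
    have hcompl : ∑' e : ↥sᶜ, F e = 0 := by
      rw [hsum] at hsplit
      exact (ENNReal.add_right_inj hfin).1 (hsplit.trans (add_zero _).symm)
    have : w x ≤ F (g x) := ENNReal.le_tsum (f := fun y : {y | y ∈ s ∧ g y = g x} => w y)
      ⟨x, hx, rfl⟩
    exact hwx (le_zero_iff.1 (this.trans
      (ENNReal.tsum_eq_zero.1 hcompl ⟨g x, hgx⟩).le))
  · refine le_antisymm ?_ (hle e he)
    by_contra hlt
    have := ENNReal.tsum_lt_tsum (i := ⟨e, he⟩) hfin hFw (not_le.1 hlt)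
    exact this.ne hsum.symm

theorem ENNReal.exists_max_of_tsum_ne_top {s A : Set α} {w : α → ℝ≥0∞}
    (hfin : ∑' x : s, w x ≠ ∞) (hAs : A ⊆ s) {x : α} (hxA : x ∈ A) (hx : w x ≠ 0) :
    ∃ y ∈ A, ∀ z ∈ A, w z ≤ w y := by
  have hlarge : (A ∩ {z | w x ≤ w z}).Finite := by
    refine ((ENNReal.finite_const_le_of_tsum_ne_top hfin hx).image Subtype.val).subset ?_
    rintro z ⟨hzA, hz⟩
    exact ⟨⟨z, hAs hzA⟩, hz, rfl⟩
  obtain ⟨y, ⟨hyA, hxy⟩, hmax⟩ :=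
    Set.exists_max_image _ w hlarge ⟨x, hxA, show w x ≤ w x from le_rfl⟩
  refine ⟨y, hyA, fun z hz => ?_⟩
  rcases le_total (w x) (w z) with hxz | hzx
  · exact hmax z ⟨hz, hxz⟩
  · exact hzx.trans hxy

theorem eqOn_id_of_tsum_fiber_le {s : Set α} {w : α → ℝ≥0∞} {g : α → α}
    (hfin : ∑' x : s, w x ≠ ∞) (hpos : ∀ x ∈ s, w x ≠ 0) (hmaps : Set.MapsTo g s s)
    (hgrow : ∀ x ∈ s, g x ≠ x → w x < w (g x))
    (hfiber : ∀ e ∈ s, ∑' x : {x | x ∈ s ∧ g x = e}, w x ≤ w e) :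
    Set.EqOn g id s := by
  intro x hx
  by_contra hmoved
  obtain ⟨y, ⟨hys, hgy⟩, hmax⟩ := ENNReal.exists_max_of_tsum_ne_top (A := {y | y ∈ s ∧ g y ≠ y})
    hfin (fun _ h => h.1) ⟨hx, hmoved⟩ (hpos x hx)
  have hgys : g y ∈ s := hmaps hys
  have hlt : w y < w (g y) := hgrow y hys hgy
  have hfix : g (g y) = g y := by
    by_contra h
    exact (hmax (g y) ⟨hgys, h⟩).not_gt hlt
  have hpair : w y + w (g y) ≤ ∑' z : {z | z ∈ s ∧ g z = g y}, w z := by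
    classical
    have hne : (⟨y, hys, rfl⟩ : {z | z ∈ s ∧ g z = g y}) ≠ ⟨g y, hgys, hfix⟩ :=
      fun h => hgy (congrArg Subtype.val h).symm
    exact (Finset.sum_pair (f := fun z : {z | z ∈ s ∧ g z = g y} => w z) hne).symm.trans_le
      (ENNReal.sum_le_tsum _)
  have hgy_top : w (g y) ≠ ∞ :=
    ne_top_of_le_ne_top hfin (ENNReal.le_tsum (f := fun z : s => w z) ⟨g y, hgys⟩)
  have : w y + w (g y) ≤ 0 + w (g y) := by
    rw [zero_add]; exact hpair.trans (hfiber _ hgys)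
  exact hpos y hys (le_zero_iff.1 (ENNReal.le_of_add_le_add_right hgy_top this))

section Discs

open Metric Bornology

variable {E : Type*} [NormedAddCommGroup E] [NormedSpace ℝ E]

theorem eq_of_ball_subset_ball {z w : E} {r : ℝ} (hr : 0 < r) (h : ball z r ⊆ ball w r) :
    z = w := by
  by_contra hzw
  set d := dist z w
  have hd : 0 < d := dist_pos.2 hzw
  have hdr : d < r := h (mem_ball_self hr)
  -- the point of the ray from `w` through `z` at distance `r` from `w` is still in `ball z r`
  set p := AffineMap.lineMap w z (r / d)
  have hpz : dist p z < r := by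
    rw [dist_lineMap_right, Real.norm_eq_abs, dist_comm, abs_sub_comm,
      abs_of_nonneg (by rw [sub_nonneg, one_le_div hd]; exact hdr.le), sub_mul,
      div_mul_cancel₀ _ hd.ne']
    linarith
  have hpw : dist p w = r := by
    rw [dist_lineMap_left, Real.norm_eq_abs, dist_comm, abs_of_pos (div_pos hr hd),
      div_mul_cancel₀ _ hd.ne']
  exact (h hpz).ne hpw

theorem not_compl_subset_of_isBounded [Nontrivial E] {s t : Set E} (hs : IsBounded s)
    (ht : IsBounded t) : ¬sᶜ ⊆ t := fun h =>
  NormedSpace.unbounded_univ ℝ E (Set.compl_subset_iff_union.1 h ▸ hs.union ht)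

theorem discRadius_ball (z : ℂ) {r : ℝ} (hr : 0 ≤ r) : discRadius (ball z r) = r := by
  simp [discRadius, diam_ball_eq z hr]

theorem IsOpenDisc.discRadius_pos {U : Set ℂ} (hU : IsOpenDisc U) : 0 < discRadius U := by
  obtain ⟨z, r, hr, rfl⟩ := hU
  rwa [discRadius_ball z hr.le]

theorem IsOpenDisc.isBounded {U : Set ℂ} (hU : IsOpenDisc U) : IsBounded U := by
  obtain ⟨z, r, -, rfl⟩ := hU
  exact isBounded_ball

theorem IsClosedDisc.isBounded {U : Set ℂ} (hU : IsClosedDisc U) : IsBounded U := by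
  obtain ⟨z, r, -, rfl⟩ := hU
  exact isBounded_closedBall

theorem IsOpenDisc.discRadius_lt_of_ssubset {U V : Set ℂ} (hU : IsOpenDisc U)
    (hV : IsOpenDisc V) (h : U ⊂ V) : discRadius U < discRadius V := by
  obtain ⟨z, r, hr, rfl⟩ := hU
  obtain ⟨w, s, hs, rfl⟩ := hV
  rw [discRadius_ball z hr.le, discRadius_ball w hs.le]
  have hrs : r ≤ s := by
    have := diam_mono h.subset isBounded_ball
    rw [diam_ball_eq z hr.le, diam_ball_eq w hs.le] at this
    linarith
  refine hrs.lt_of_ne fun hrs => h.ne ?_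
  subst hrs
  rw [eq_of_ball_subset_ball hr h.subset]

end Discs

theorem isAllocationMap_id (D : SwissCheese) : IsAllocationMap D D id where
  maps_to _ hU := hU
  a1 _ _ := subset_rfl
  a2 := by simp
  a3 E hE := by
    have hfiber : {U | U ∈ D.𝒟 ∧ id U = E} = {E} := by
      ext U
      exact ⟨fun h => h.2, fun h => ⟨h ▸ hE, h⟩⟩
    rw [radSum, hfiber, tsum_singleton E fun U => ENNReal.ofReal (discRadius U)]

theorem IsAllocationMap.map_compl_eq {D E : SwissCheese} {f : Set ℂ → Set ℂ}
    (hf : IsAllocationMap D E f) : f D.Δᶜ = E.Δᶜ := by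
  have hΔ : D.Δᶜ ∈ D.tilde := Or.inr rfl
  refine (hf.maps_to _ hΔ).resolve_left fun h => ?_
  exact not_compl_subset_of_isBounded D.hΔ.isBounded (E.h𝒟 _ h).isBounded (hf.a1 _ hΔ)

theorem IsAllocationMap.eqOn_of_radSum_lt_top {D : SwissCheese} {f : Set ℂ → Set ℂ}
    (hf : IsAllocationMap D D f) (hfin : radSum D.𝒟 < ⊤) : Set.EqOn f id D.𝒟 := by
  set w : Set ℂ → ℝ≥0∞ := fun U => ENNReal.ofReal (discRadius U)
  have hfin : ∑' U : D.𝒟, w U ≠ ∞ := hfin.ne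
  have hpos : ∀ U ∈ D.𝒟, w U ≠ 0 := fun U hU =>
    (ENNReal.ofReal_pos.2 (D.h𝒟 U hU).discRadius_pos).ne'
  obtain ⟨hescape, hfiber⟩ := ENNReal.tsum_fiber_eq_of_le hfin hf.a3
  have hmaps : Set.MapsTo f D.𝒟 D.𝒟 := fun U hU => hescape U hU (hpos U hU)
  have hgrow : ∀ U ∈ D.𝒟, f U ≠ U → w U < w (f U) := fun U hU hmoved =>
    (ENNReal.ofReal_lt_ofReal_iff (D.h𝒟 _ (hmaps hU)).discRadius_pos).2 <|
      (D.h𝒟 U hU).discRadius_lt_of_ssubset (D.h𝒟 _ (hmaps hU))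
        ((hf.a1 U (Or.inl hU)).ssubset_of_ne (Ne.symm hmoved))
  exact eqOn_id_of_tsum_fiber_le hfin hpos hmaps hgrow fun E hE => (hfiber E hE).le

theorem id_allocationMap_and_unique (D : SwissCheese) :
    IsAllocationMap D D id ∧
      (radSum D.𝒟 < ⊤ →
        ∀ f : Set ℂ → Set ℂ, IsAllocationMap D D f → ∀ U ∈ D.tilde, f U = U) := by
  refine ⟨isAllocationMap_id D, fun hfin f hf => ?_⟩
  rintro U (hU | rfl)
  · exact hf.eqOn_of_radSum_lt_top hfin hU
  · exact hf.map_compl_eq
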